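/- arXiv:math/0410420 — 2 statements merged into one kernel-verified Lean document; each statement's English description precedes it below -/
import Mathlib

section
/- Let r₀ := (4ρ)^{−1} and for γ ∈ Γ with ‖γ‖_Γ ≤ r₀ let x(γ) denote the unique solution of x = G_γ(x) in the closed ball {x ∈ X : ‖x‖_X ≤ 2r₀}. Then the map γ ↦ x(γ) is continuous on {γ ∈ Γ : ‖γ‖_Γ ≤ r₀}; more precisely, ‖x(γ) − x(γ̃)‖_X ≤ 2‖γ − γ̃‖_Γ for all γ, γ̃ in this ball. -/
/-!
On the ball `‖x‖ ≤ M` with `ρ M ≤ 1/2` the convolution powers satisfy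
`‖x^{∗n} - y^{∗n}‖ ≤ n 2^{1-n} ‖x - y‖`. Subtracting the fixed-point equations and writing
`a_k ∗ x^{∗k} - b_k ∗ y^{∗k} = (a_k - b_k) ∗ x^{∗k} + b_k ∗ (x^{∗k} - y^{∗k})`, the sine part
contributes at most `‖x - y‖/6`, `a₀ - b₀` and the first summand together at most `‖γ - γ̃‖_Γ`,
and the second at most `ρ ‖γ̃‖_Γ ‖x - y‖ ≤ ‖x - y‖/4`. Hence `(7/12) ‖x - y‖ ≤ ‖γ - γ̃‖_Γ`.
-/

open MeasureTheory Complex Real Filter Set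

noncomputable section

/-- Lebesgue measure on the interval `(0, 1)`. -/
def mu01 : Measure ℝ := volume.restrict (Set.Ioo (0 : ℝ) 1)

/-- `convPow conv x k` is the `(k+1)`-fold convolution power `x^{∗(k+1)}`. -/
def convPow {X : Type*} (conv : X → X → X) (x : X) : ℕ → X
  | 0 => x
  | k + 1 => conv x (convPow conv x k)

/-- The Γ-norm `‖γ‖_Γ = ‖a₀‖ + Σ_{k≥1} ‖a_k‖/(k-1)!` of a sequence `γ = (a_k)_{k≥0}`. -/
def gammaNorm {X : Type*} [NormedAddCommGroup X] (a : ℕ → X) : ℝ :=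
  ‖a 0‖ + ∑' k : ℕ, ‖a (k + 1)‖ / (Nat.factorial k : ℝ)

/-- The nonlinear map
`G_γ(x) = Σ_{k≥1} (-1)^k x^{∗(2k+1)}/(2k+1)! - a₀ - Σ_{k≥1} a_k ∗ x^{∗k}/k!`. -/
def Gmap {X : Type*} [NormedAddCommGroup X] [NormedSpace ℂ X]
    (conv : X → X → X) (a : ℕ → X) (x : X) : X :=
  (∑' k : ℕ, (((-1 : ℂ) ^ (k + 1)) / (Nat.factorial (2 * k + 3) : ℂ)) • convPow conv x (2 * k + 2))
    - a 0 - ∑' k : ℕ, ((Nat.factorial (k + 1) : ℂ))⁻¹ • conv (a (k + 1)) (convPow conv x k)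

section ConvPow

variable {X : Type*} [NormedAddCommGroup X]

theorem norm_convPow_le (conv : X → X → X) {ρ M : ℝ} (hρ : 0 ≤ ρ)
    (hbound : ∀ f g : X, ‖conv f g‖ ≤ ρ * ‖f‖ * ‖g‖) {x : X} (hx : ‖x‖ ≤ M) :
    ∀ n, ‖convPow conv x n‖ ≤ (ρ * M) ^ n * M
  | 0 => by simpa [convPow] using hx
  | n + 1 => by
    have hM : 0 ≤ M := (norm_nonneg x).trans hx
    calc ‖convPow conv x (n + 1)‖ ≤ ρ * ‖x‖ * ‖convPow conv x n‖ := hbound _ _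
      _ ≤ ρ * M * ((ρ * M) ^ n * M) := by
          gcongr
          exact norm_convPow_le conv hρ hbound hx n
      _ = (ρ * M) ^ (n + 1) * M := by ring

variable {R : Type*} [CommSemiring R] [Module R X]

theorem zero_convPow (conv : X →ₗ[R] X →ₗ[R] X) : ∀ n, convPow (conv · ·) 0 n = 0
  | 0 => rfl
  | n + 1 => by simp [convPow]

theorem norm_convPow_sub_le (conv : X →ₗ[R] X →ₗ[R] X) {ρ M : ℝ} (hρ : 0 ≤ ρ)
    (hbound : ∀ f g : X, ‖conv f g‖ ≤ ρ * ‖f‖ * ‖g‖) {x y : X} (hx : ‖x‖ ≤ M) (hy : ‖y‖ ≤ M) :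
    ∀ n, ‖convPow (conv · ·) x n - convPow (conv · ·) y n‖ ≤ (n + 1) * (ρ * M) ^ n * ‖x - y‖
  | 0 => by simp [convPow]
  | n + 1 => by
    have hM : 0 ≤ M := (norm_nonneg x).trans hx
    set P := convPow (conv · ·) x n
    set Q := convPow (conv · ·) y n
    have hsplit : convPow (conv · ·) x (n + 1) - convPow (conv · ·) y (n + 1)
        = conv (x - y) P + conv y (P - Q) := by
      simp only [convPow, map_sub, LinearMap.sub_apply, P, Q]
      abel
    calc ‖convPow (conv · ·) x (n + 1) - convPow (conv · ·) y (n + 1)‖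
        ≤ ‖conv (x - y) P‖ + ‖conv y (P - Q)‖ := hsplit ▸ norm_add_le _ _
      _ ≤ ρ * ‖x - y‖ * ((ρ * M) ^ n * M) + ρ * M * ((n + 1) * (ρ * M) ^ n * ‖x - y‖) := by
          gcongr
          · exact (hbound _ _).trans (by gcongr; exact norm_convPow_le _ hρ hbound hx n)
          · exact (hbound _ _).trans (by gcongr; exact norm_convPow_sub_le conv hρ hbound hx hy n)
      _ = ((n + 1 : ℕ) + 1) * (ρ * M) ^ (n + 1) * ‖x - y‖ := by push_cast; ring

end ConvPow

section Gmap

variable {X : Type*} [NormedAddCommGroup X] [NormedSpace ℂ X] (conv : X →ₗ[ℂ] X →ₗ[ℂ] X)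

/-- The terms of `sin x - x`: the `k`-th one is `(-1)^(k+1) x^{∗(2k+3)}/(2k+3)!`. -/
def sinTailTerm (x : X) (k : ℕ) : X :=
  (((-1 : ℂ) ^ (k + 1)) / (Nat.factorial (2 * k + 3) : ℂ)) • convPow (conv · ·) x (2 * k + 2)

def coeffSeriesTerm (c : ℕ → X) (x : X) (k : ℕ) : X :=
  ((Nat.factorial (k + 1) : ℂ))⁻¹ • conv (c (k + 1)) (convPow (conv · ·) x k)

theorem Gmap_eq (a : ℕ → X) (x : X) :
    Gmap (conv · ·) a x = ∑' k, sinTailTerm conv x k - a 0 - ∑' k, coeffSeriesTerm conv a x k :=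
  rfl

theorem coeffSeriesTerm_sub (a b : ℕ → X) (x : X) (k : ℕ) :
    coeffSeriesTerm conv (a - b) x k = coeffSeriesTerm conv a x k - coeffSeriesTerm conv b x k := by
  simp [coeffSeriesTerm, smul_sub]

variable {conv} {ρ M : ℝ} {x y : X}

theorem norm_sinTailTerm_sub_le (hρ : 0 ≤ ρ) (hbound : ∀ f g : X, ‖conv f g‖ ≤ ρ * ‖f‖ * ‖g‖)
    (hx : ‖x‖ ≤ M) (hy : ‖y‖ ≤ M) (hρM : ρ * M ≤ 1 / 2) (k : ℕ) :
    ‖sinTailTerm conv x k - sinTailTerm conv y k‖ ≤ ‖x - y‖ / 8 * (1 / 4) ^ k := by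
  have hρM₀ : 0 ≤ ρ * M := mul_nonneg hρ ((norm_nonneg x).trans hx)
  have hfact : (2 : ℝ) ≤ (2 * k + 2).factorial := by
    exact_mod_cast (Nat.factorial_le (show 2 ≤ 2 * k + 2 by omega))
  calc ‖sinTailTerm conv x k - sinTailTerm conv y k‖
      = ‖convPow (conv · ·) x (2 * k + 2) - convPow (conv · ·) y (2 * k + 2)‖
          / (2 * k + 3).factorial := by
        simp [sinTailTerm, ← smul_sub, norm_smul, div_eq_inv_mul]
    _ ≤ ((2 * k + 2 : ℕ) + 1) * (ρ * M) ^ (2 * k + 2) * ‖x - y‖ / (2 * k + 3).factorial := by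
        gcongr
        exact norm_convPow_sub_le conv hρ hbound hx hy _
    _ = (ρ * M) ^ (2 * k + 2) * ‖x - y‖ / (2 * k + 2).factorial := by
        rw [show 2 * k + 3 = 2 * k + 2 + 1 by ring, Nat.factorial_succ]
        push_cast
        field_simp
    _ ≤ (1 / 2) ^ (2 * k + 2) * ‖x - y‖ / 2 := by gcongr
    _ = ‖x - y‖ / 8 * (1 / 4) ^ k := by
        rw [pow_add, pow_mul]
        ring

theorem norm_coeffSeriesTerm_le (hρ : 0 ≤ ρ) (hbound : ∀ f g : X, ‖conv f g‖ ≤ ρ * ‖f‖ * ‖g‖)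
    (hx : ‖x‖ ≤ M) (hρM : ρ * M ≤ 1 / 2) (c : ℕ → X) (k : ℕ) :
    ‖coeffSeriesTerm conv c x k‖ ≤ ‖c (k + 1)‖ / k.factorial / 2 := by
  have hρM₀ : 0 ≤ ρ * M := mul_nonneg hρ ((norm_nonneg x).trans hx)
  calc ‖coeffSeriesTerm conv c x k‖
      = ‖conv (c (k + 1)) (convPow (conv · ·) x k)‖ / (k + 1).factorial := by
        simp [coeffSeriesTerm, norm_smul, div_eq_inv_mul]
    _ ≤ ρ * ‖c (k + 1)‖ * ((ρ * M) ^ k * M) / (k + 1).factorial := by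
        gcongr
        exact (hbound _ _).trans (by gcongr; exact norm_convPow_le _ hρ hbound hx k)
    _ = ‖c (k + 1)‖ * (ρ * M) ^ (k + 1) / (k + 1).factorial := by ring
    _ ≤ ‖c (k + 1)‖ * (1 / 2) / k.factorial := by
        gcongr ?_ * ?_ / ?_
        · exact pow_le_of_le_one hρM₀ (hρM.trans (by norm_num)) k.succ_ne_zero |>.trans hρM
        · exact_mod_cast Nat.factorial_le k.le_succ
    _ = ‖c (k + 1)‖ / k.factorial / 2 := by ring

theorem norm_coeffSeriesTerm_sub_le (hρ : 0 ≤ ρ)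
    (hbound : ∀ f g : X, ‖conv f g‖ ≤ ρ * ‖f‖ * ‖g‖)
    (hx : ‖x‖ ≤ M) (hy : ‖y‖ ≤ M) (hρM : ρ * M ≤ 1 / 2) (c : ℕ → X) (k : ℕ) :
    ‖coeffSeriesTerm conv c x k - coeffSeriesTerm conv c y k‖
      ≤ ρ * ‖x - y‖ * (‖c (k + 1)‖ / k.factorial) := by
  have hρM₀ : 0 ≤ ρ * M := mul_nonneg hρ ((norm_nonneg x).trans hx)
  calc ‖coeffSeriesTerm conv c x k - coeffSeriesTerm conv c y k‖
      = ‖conv (c (k + 1)) (convPow (conv · ·) x k - convPow (conv · ·) y k)‖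
          / (k + 1).factorial := by
        simp [coeffSeriesTerm, ← smul_sub, norm_smul, div_eq_inv_mul]
    _ ≤ ρ * ‖c (k + 1)‖ * ((k + 1) * (ρ * M) ^ k * ‖x - y‖) / (k + 1).factorial := by
        gcongr
        exact (hbound _ _).trans (by gcongr; exact norm_convPow_sub_le conv hρ hbound hx hy k)
    _ = ρ * ‖x - y‖ * (‖c (k + 1)‖ / k.factorial) * (ρ * M) ^ k := by
        rw [Nat.factorial_succ]
        push_cast
        field_simp
    _ ≤ ρ * ‖x - y‖ * (‖c (k + 1)‖ / k.factorial) := by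
        refine mul_le_of_le_one_right (by positivity) (pow_le_one₀ hρM₀ (hρM.trans (by norm_num)))

theorem norm_tsum_coeffSeriesTerm_le (hρ : 0 ≤ ρ)
    (hbound : ∀ f g : X, ‖conv f g‖ ≤ ρ * ‖f‖ * ‖g‖)
    (hx : ‖x‖ ≤ M) (hρM : ρ * M ≤ 1 / 2) {c : ℕ → X}
    (hc : Summable fun k : ℕ => ‖c (k + 1)‖ / k.factorial) :
    ‖∑' k, coeffSeriesTerm conv c x k‖ ≤ (∑' k : ℕ, ‖c (k + 1)‖ / k.factorial) / 2 :=
  tsum_of_norm_bounded (hc.hasSum.div_const 2) (norm_coeffSeriesTerm_le hρ hbound hx hρM c)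

variable [CompleteSpace X]

theorem summable_sinTailTerm (hρ : 0 ≤ ρ) (hbound : ∀ f g : X, ‖conv f g‖ ≤ ρ * ‖f‖ * ‖g‖)
    (hx : ‖x‖ ≤ M) (hρM : ρ * M ≤ 1 / 2) : Summable (sinTailTerm conv x) := by
  have hM : ‖(0 : X)‖ ≤ M := norm_zero (E := X) ▸ (norm_nonneg x).trans hx
  refine .of_norm_bounded ((summable_geometric_of_lt_one (r := (1 / 4 : ℝ)) (by norm_num)
    (by norm_num)).mul_left (‖x‖ / 8)) fun k => ?_
  simpa [sinTailTerm, zero_convPow] using norm_sinTailTerm_sub_le hρ hbound hx hM hρM k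

theorem norm_tsum_sinTailTerm_sub_le (hρ : 0 ≤ ρ)
    (hbound : ∀ f g : X, ‖conv f g‖ ≤ ρ * ‖f‖ * ‖g‖)
    (hx : ‖x‖ ≤ M) (hy : ‖y‖ ≤ M) (hρM : ρ * M ≤ 1 / 2) :
    ‖∑' k, sinTailTerm conv x k - ∑' k, sinTailTerm conv y k‖ ≤ ‖x - y‖ / 6 := by
  rw [← (summable_sinTailTerm hρ hbound hx hρM).tsum_sub (summable_sinTailTerm hρ hbound hy hρM)]
  have hgeom := (hasSum_geometric_of_lt_one (r := (1 / 4 : ℝ)) (by norm_num) (by norm_num)).mul_left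
    (‖x - y‖ / 8)
  refine (tsum_of_norm_bounded hgeom (norm_sinTailTerm_sub_le hρ hbound hx hy hρM)).trans_eq ?_
  norm_num
  ring

theorem summable_coeffSeriesTerm (hρ : 0 ≤ ρ) (hbound : ∀ f g : X, ‖conv f g‖ ≤ ρ * ‖f‖ * ‖g‖)
    (hx : ‖x‖ ≤ M) (hρM : ρ * M ≤ 1 / 2) {c : ℕ → X}
    (hc : Summable fun k : ℕ => ‖c (k + 1)‖ / k.factorial) :
    Summable (coeffSeriesTerm conv c x) :=
  .of_norm_bounded (hc.div_const 2) (norm_coeffSeriesTerm_le hρ hbound hx hρM c)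

theorem norm_tsum_coeffSeriesTerm_sub_le (hρ : 0 ≤ ρ)
    (hbound : ∀ f g : X, ‖conv f g‖ ≤ ρ * ‖f‖ * ‖g‖)
    (hx : ‖x‖ ≤ M) (hy : ‖y‖ ≤ M) (hρM : ρ * M ≤ 1 / 2) {c : ℕ → X}
    (hc : Summable fun k : ℕ => ‖c (k + 1)‖ / k.factorial) :
    ‖∑' k, coeffSeriesTerm conv c x k - ∑' k, coeffSeriesTerm conv c y k‖
      ≤ ρ * ‖x - y‖ * ∑' k : ℕ, ‖c (k + 1)‖ / k.factorial := by
  rw [← (summable_coeffSeriesTerm hρ hbound hx hρM hc).tsum_sub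
    (summable_coeffSeriesTerm hρ hbound hy hρM hc)]
  exact tsum_of_norm_bounded (hc.hasSum.mul_left _)
    (norm_coeffSeriesTerm_sub_le hρ hbound hx hy hρM c)

theorem norm_Gmap_sub_Gmap_le (hρ : 0 ≤ ρ) (hbound : ∀ f g : X, ‖conv f g‖ ≤ ρ * ‖f‖ * ‖g‖)
    {a b : ℕ → X} (ha : Summable fun k : ℕ => ‖a (k + 1)‖ / k.factorial)
    (hb : Summable fun k : ℕ => ‖b (k + 1)‖ / k.factorial)
    (hx : ‖x‖ ≤ M) (hy : ‖y‖ ≤ M) (hρM : ρ * M ≤ 1 / 2) :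
    ‖Gmap (conv · ·) a x - Gmap (conv · ·) b y‖
      ≤ (1 / 6 + ρ * gammaNorm b) * ‖x - y‖ + gammaNorm (a - b) := by
  have hab : Summable fun k : ℕ => ‖(a - b) (k + 1)‖ / k.factorial :=
    (ha.add hb).of_nonneg_of_le (fun k => by positivity) fun k => by
      rw [← add_div]
      gcongr
      exact norm_sub_le _ _
  set T := fun (c : ℕ → X) (z : X) => ∑' k, coeffSeriesTerm conv c z k
  have hT : T a x - T b y = T (a - b) x + (T b x - T b y) := by
    have : T (a - b) x = T a x - T b x := by
      simp only [T, coeffSeriesTerm_sub]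
      exact (summable_coeffSeriesTerm hρ hbound hx hρM ha).tsum_sub
        (summable_coeffSeriesTerm hρ hbound hx hρM hb)
    rw [this]
    abel
  have hSb : ∑' k : ℕ, ‖b (k + 1)‖ / k.factorial ≤ gammaNorm b :=
    le_add_of_nonneg_left (norm_nonneg _)
  have hSab : 0 ≤ ∑' k : ℕ, ‖(a - b) (k + 1)‖ / k.factorial := tsum_nonneg fun k => by positivity
  have hδ : 0 ≤ ρ * ‖x - y‖ := by positivity
  calc ‖Gmap (conv · ·) a x - Gmap (conv · ·) b y‖
      = ‖(∑' k, sinTailTerm conv x k - ∑' k, sinTailTerm conv y k) - (a 0 - b 0)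
          - (T (a - b) x + (T b x - T b y))‖ := by
        rw [Gmap_eq, Gmap_eq, ← hT]
        congr 1
        abel
    _ ≤ ‖∑' k, sinTailTerm conv x k - ∑' k, sinTailTerm conv y k‖ + ‖a 0 - b 0‖
          + (‖T (a - b) x‖ + ‖T b x - T b y‖) :=
        (norm_sub_le _ _).trans (add_le_add (norm_sub_le _ _) (norm_add_le _ _))
    _ ≤ ‖x - y‖ / 6 + ‖a 0 - b 0‖ + ((∑' k : ℕ, ‖(a - b) (k + 1)‖ / k.factorial) / 2
          + ρ * ‖x - y‖ * ∑' k : ℕ, ‖b (k + 1)‖ / k.factorial) := by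
        gcongr
        · exact norm_tsum_sinTailTerm_sub_le hρ hbound hx hy hρM
        · exact norm_tsum_coeffSeriesTerm_le hρ hbound hx hρM hab
        · exact norm_tsum_coeffSeriesTerm_sub_le hρ hbound hx hy hρM hb
    _ ≤ (1 / 6 + ρ * gammaNorm b) * ‖x - y‖ + gammaNorm (a - b) := by
        have := mul_le_mul_of_nonneg_left hSb hδ
        simp only [gammaNorm, Pi.sub_apply] at this hSab ⊢
        linarith

end Gmap

theorem Gmap_fixed_point_continuous_general
    {X : Type*} [NormedAddCommGroup X] [NormedSpace ℂ X] [CompleteSpace X]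
    -- `X` is an algebra with respect to cyclic convolution
    (conv : X →ₗ[ℂ] X →ₗ[ℂ] X)
    (ρ : ℝ) (hρ : 0 < ρ) (hbound : ∀ f g : X, ‖conv f g‖ ≤ ρ * ‖f‖ * ‖g‖)
    -- `γ = (a_k)` and `γ̃ = (b_k)` in `Γ` with norms `≤ r₀ = (4ρ)⁻¹`
    (a b : ℕ → X)
    (ha : Summable (fun k : ℕ => ‖a (k + 1)‖ / (Nat.factorial k : ℝ)))
    (hb : Summable (fun k : ℕ => ‖b (k + 1)‖ / (Nat.factorial k : ℝ)))
    (hγb : gammaNorm b ≤ (4 * ρ)⁻¹)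
    -- `x` and `y` are the corresponding fixed points in the ball `{‖·‖ ≤ 2r₀}`
    (x y : X)
    (hx : ‖x‖ ≤ 2 * (4 * ρ)⁻¹ ∧ x = Gmap (fun u v => conv u v) a x)
    (hy : ‖y‖ ≤ 2 * (4 * ρ)⁻¹ ∧ y = Gmap (fun u v => conv u v) b y) :
    ‖x - y‖ ≤ 2 * gammaNorm (fun k => a k - b k) := by
  show ‖x - y‖ ≤ 2 * gammaNorm (a - b)
  obtain ⟨hxM, hx⟩ := hx
  obtain ⟨hyM, hy⟩ := hy
  have hρM : ρ * (2 * (4 * ρ)⁻¹) ≤ 1 / 2 := by field_simp; norm_num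
  have hρb : ρ * gammaNorm b ≤ 1 / 4 := by
    calc ρ * gammaNorm b ≤ ρ * (4 * ρ)⁻¹ := by gcongr
      _ = 1 / 4 := by field_simp
  have hcontr := norm_Gmap_sub_Gmap_le hρ.le hbound ha hb hxM hyM hρM
  rw [← hx, ← hy] at hcontr
  linarith [mul_le_mul_of_nonneg_right hρb (norm_nonneg (x - y)), norm_nonneg (x - y)]

/-- **Continuity of the fixed point.** With `r₀ = (4ρ)⁻¹`, the solution `x(γ)` of
`x = G_γ(x)` in the ball `{‖x‖ ≤ 2r₀}` depends continuously on `γ ∈ B_Γ(r₀)`; more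
precisely, `‖x(γ) - x(γ̃)‖ ≤ 2‖γ - γ̃‖_Γ`. -/
theorem Gmap_fixed_point_continuous
    {X : Type*} [NormedAddCommGroup X] [NormedSpace ℂ X] [CompleteSpace X]
    -- `X` is continuously embedded in `L¹(0,1)`
    (ι : X →L[ℂ] Lp ℂ 1 mu01) (hι : Function.Injective ι)
    -- `X` is an algebra with respect to cyclic convolution
    (conv : X →ₗ[ℂ] X →ₗ[ℂ] X)
    (hconv : ∀ f g : X, (ι (conv f g) : ℝ → ℂ)
      =ᵐ[mu01] fun x => ∫ t, (ι f : ℝ → ℂ) (Int.fract (x - t)) * (ι g : ℝ → ℂ) t ∂mu01)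
    (ρ : ℝ) (hρ : 0 < ρ) (hbound : ∀ f g : X, ‖conv f g‖ ≤ ρ * ‖f‖ * ‖g‖)
    -- `γ = (a_k)` and `γ̃ = (b_k)` in `Γ` with norms `≤ r₀ = (4ρ)⁻¹`
    (a b : ℕ → X)
    (ha : Summable (fun k : ℕ => ‖a (k + 1)‖ / (Nat.factorial k : ℝ)))
    (hb : Summable (fun k : ℕ => ‖b (k + 1)‖ / (Nat.factorial k : ℝ)))
    (hγa : gammaNorm a ≤ (4 * ρ)⁻¹) (hγb : gammaNorm b ≤ (4 * ρ)⁻¹)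
    -- `x` and `y` are the corresponding fixed points in the ball `{‖·‖ ≤ 2r₀}`
    (x y : X)
    (hx : ‖x‖ ≤ 2 * (4 * ρ)⁻¹ ∧ x = Gmap (fun u v => conv u v) a x)
    (hy : ‖y‖ ≤ 2 * (4 * ρ)⁻¹ ∧ y = Gmap (fun u v => conv u v) b y) :
    ‖x - y‖ ≤ 2 * gammaNorm (fun k => a k - b k) :=
  Gmap_fixed_point_continuous_general conv ρ hρ hbound a b ha hb hγb x y hx hy
end
end

section
/- For g ∈ X, define the linear operator A_g on X by A_g f = f + Σ_{k=1}^∞ (M^k f) ∗ g^{∗k} / k!. Then A_g is a bounded operator on X, with ‖A_g − I‖ ≤ exp(ρ‖M‖‖g‖_X) − 1; moreover, if ‖g‖_X ≤ (2ρ‖M‖)^{−1}, then A_g is boundedly invertible on X. -/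
open MeasureTheory Complex Real Filter Set

noncomputable section

/-!
Writing `A_g = I + Σ_{k ≥ 1} T_k` with `T_k f = (M^k f) ∗ g^{∗k} / k!`, submultiplicativity of the
convolution gives `‖T_k‖ ≤ (ρ‖M‖‖g‖)^k / k!`. The series therefore converges absolutely in operator
norm, and `‖A_g - I‖` is at most the exponential series without its constant term. When
`ρ‖M‖‖g‖ ≤ 1/2` this bound is `exp(1/2) - 1 < 1`, so `A_g` is invertible by the Neumann series.
-/

open scoped Nat

theorem Real.hasSum_pow_succ_div_factorial (x : ℝ) :
    HasSum (fun k : ℕ => x ^ (k + 1) / (k + 1)!) (Real.exp x - 1) := by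
  simpa [Real.exp_eq_exp_ℝ] using
    (hasSum_nat_add_iff' 1).mpr (NormedSpace.expSeries_div_hasSum_exp x)

theorem Real.exp_sub_one_lt_one_of_le_half {x : ℝ} (hx : x ≤ 1 / 2) : Real.exp x - 1 < 1 := by
  have h := Real.exp_bound_div_one_sub_of_interval' (x := 1 / 2) (by norm_num) (by norm_num)
  have := Real.exp_le_exp.mpr hx
  norm_num at h
  linarith

theorem norm_convPow_le_s12 {X : Type*} [SeminormedAddCommGroup X] {conv : X → X → X} {ρ : ℝ}
    (hρ : 0 ≤ ρ) (hconv : ∀ f g, ‖conv f g‖ ≤ ρ * ‖f‖ * ‖g‖) (g : X) (k : ℕ) :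
    ‖convPow conv g k‖ ≤ ρ ^ k * ‖g‖ ^ (k + 1) := by
  induction k with
  | zero => simp [convPow]
  | succ k ih =>
    calc ‖convPow conv g (k + 1)‖ ≤ ρ * ‖g‖ * ‖convPow conv g k‖ := hconv _ _
      _ ≤ ρ * ‖g‖ * (ρ ^ k * ‖g‖ ^ (k + 1)) := by gcongr
      _ = ρ ^ (k + 1) * ‖g‖ ^ (k + 2) := by ring

section AgOperator

variable {𝕜 X : Type*} [RCLike 𝕜] [NormedAddCommGroup X] [NormedSpace 𝕜 X]

/-- `f ↦ (M^(k+1) f) ∗ g^{∗(k+1)} / (k+1)!`, with `B` as the convolution. -/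
def agTerm (B : X →L[𝕜] X →L[𝕜] X) (M : X →L[𝕜] X) (g : X) (k : ℕ) :
    X →L[𝕜] X :=
  ((k + 1)! : 𝕜)⁻¹ • (B.flip (convPow (fun u v => B u v) g k)).comp (M ^ (k + 1))

theorem norm_agTerm_le (B : X →L[𝕜] X →L[𝕜] X) (M : X →L[𝕜] X) (g : X) (k : ℕ) :
    ‖agTerm B M g k‖ ≤ (‖B‖ * ‖M‖ * ‖g‖) ^ (k + 1) / (k + 1)! := by
  have hpow := norm_convPow_le_s12 (norm_nonneg B) (fun u v => B.le_opNorm₂ u v) g k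
  calc ‖agTerm B M g k‖
      ≤ ((k + 1)! : ℝ)⁻¹ * (‖B‖ * ‖convPow (fun u v => B u v) g k‖ * ‖M ^ (k + 1)‖) := by
        rw [agTerm, norm_smul, norm_inv, RCLike.norm_natCast]
        gcongr
        refine (ContinuousLinearMap.opNorm_comp_le _ _).trans (mul_le_mul_of_nonneg_right ?_ ?_)
        · simpa only [ContinuousLinearMap.opNorm_flip] using B.flip.le_opNorm _
        · exact norm_nonneg _
    _ ≤ ((k + 1)! : ℝ)⁻¹ * (‖B‖ * (‖B‖ ^ k * ‖g‖ ^ (k + 1)) * ‖M‖ ^ (k + 1)) := by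
        gcongr
        exact norm_pow_le' M k.succ_pos
    _ = (‖B‖ * ‖M‖ * ‖g‖) ^ (k + 1) / (k + 1)! := by ring

def agOperator (B : X →L[𝕜] X →L[𝕜] X) (M : X →L[𝕜] X) (g : X) : X →L[𝕜] X :=
  1 + ∑' k, agTerm B M g k

theorem norm_tsum_agTerm_le (B : X →L[𝕜] X →L[𝕜] X) (M : X →L[𝕜] X) (g : X) :
    ‖∑' k, agTerm B M g k‖ ≤ Real.exp (‖B‖ * ‖M‖ * ‖g‖) - 1 :=
  tsum_of_norm_bounded (Real.hasSum_pow_succ_div_factorial _) (norm_agTerm_le B M g)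

theorem norm_agOperator_sub_one_le (B : X →L[𝕜] X →L[𝕜] X) (M : X →L[𝕜] X) (g : X) :
    ‖agOperator B M g - 1‖ ≤ Real.exp (‖B‖ * ‖M‖ * ‖g‖) - 1 := by
  simpa [agOperator] using norm_tsum_agTerm_le B M g

theorem isUnit_agOperator [CompleteSpace X] {B : X →L[𝕜] X →L[𝕜] X} {M : X →L[𝕜] X} {g : X}
    (hg : ‖B‖ * ‖M‖ * ‖g‖ ≤ 1 / 2) : IsUnit (agOperator B M g) := by
  have hlt : ‖-∑' k, agTerm B M g k‖ < 1 := by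
    rw [norm_neg]
    exact (norm_tsum_agTerm_le B M g).trans_lt (Real.exp_sub_one_lt_one_of_le_half hg)
  simpa [agOperator] using isUnit_one_sub_of_norm_lt_one hlt

theorem agOperator_apply [CompleteSpace X] (B : X →L[𝕜] X →L[𝕜] X) (M : X →L[𝕜] X) (g : X)
    (f : X) :
    agOperator B M g f = f + ∑' k : ℕ,
      ((k + 1)! : 𝕜)⁻¹ • B ((M ^ (k + 1)) f) (convPow (fun u v => B u v) g k) := by
  have hsum : Summable (agTerm B M g) :=
    .of_norm_bounded (Real.hasSum_pow_succ_div_factorial _).summable (norm_agTerm_le B M g)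
  rw [agOperator, add_apply, one_apply_eq_self,
    ← ContinuousLinearMap.apply_apply f, (ContinuousLinearMap.apply 𝕜 X f).map_tsum hsum]
  rfl

end AgOperator

theorem Ag_bounded_and_invertible_general
    {X : Type*} [NormedAddCommGroup X] [NormedSpace ℂ X] [CompleteSpace X]
    -- `X` is an algebra with respect to cyclic convolution
    (conv : X →ₗ[ℂ] X →ₗ[ℂ] X)
    (ρ : ℝ) (hρ : 0 < ρ) (hbound : ∀ f g : X, ‖conv f g‖ ≤ ρ * ‖f‖ * ‖g‖)
    -- the operator `M` of multiplication by `i(2t-1)` is bounded on `X`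
    (M : X →L[ℂ] X)
    (g : X) :
    ∃ A : X →L[ℂ] X,
      (∀ f : X, A f = f + ∑' k : ℕ,
        ((Nat.factorial (k + 1) : ℂ))⁻¹ •
          conv ((M ^ (k + 1)) f) (convPow (fun u v => conv u v) g k)) ∧
      ‖A - 1‖ ≤ Real.exp (ρ * ‖M‖ * ‖g‖) - 1 ∧
      (‖g‖ ≤ (2 * ρ * ‖M‖)⁻¹ → IsUnit A) := by
  set B := conv.mkContinuous₂ ρ hbound
  have hB : ‖B‖ * ‖M‖ * ‖g‖ ≤ ρ * ‖M‖ * ‖g‖ := by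
    gcongr
    exact LinearMap.mkContinuous₂_norm_le _ hρ.le _
  refine ⟨agOperator B M g, agOperator_apply B M g,
    (norm_agOperator_sub_one_le B M g).trans (by gcongr), fun hg => isUnit_agOperator ?_⟩
  refine hB.trans ?_
  rcases (norm_nonneg M).eq_or_lt with hM | hM
  · simp [← hM]
  · calc ρ * ‖M‖ * ‖g‖ ≤ ρ * ‖M‖ * (2 * ρ * ‖M‖)⁻¹ := by gcongr
      _ = 1 / 2 := by field_simp

/-- **The operator `A_g`.** For `g ∈ X`, the operator `A_g f = f + Σ_{k≥1} (M^k f) ∗ g^{∗k}/k!`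
is a bounded linear operator on `X` with `‖A_g - I‖ ≤ exp(ρ‖M‖‖g‖) - 1`; moreover, if
`‖g‖ ≤ (2ρ‖M‖)⁻¹`, then `A_g` is boundedly invertible. -/
theorem Ag_bounded_and_invertible
    {X : Type*} [NormedAddCommGroup X] [NormedSpace ℂ X] [CompleteSpace X]
    -- `X` is continuously embedded in `L¹(0,1)`
    (ι : X →L[ℂ] Lp ℂ 1 mu01) (hι : Function.Injective ι)
    -- `X` is an algebra with respect to cyclic convolution
    (conv : X →ₗ[ℂ] X →ₗ[ℂ] X)
    (hconv : ∀ f g : X, (ι (conv f g) : ℝ → ℂ)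
      =ᵐ[mu01] fun x => ∫ t, (ι f : ℝ → ℂ) (Int.fract (x - t)) * (ι g : ℝ → ℂ) t ∂mu01)
    (ρ : ℝ) (hρ : 0 < ρ) (hbound : ∀ f g : X, ‖conv f g‖ ≤ ρ * ‖f‖ * ‖g‖)
    -- the operator `M` of multiplication by `i(2t-1)` is bounded on `X`
    (M : X →L[ℂ] X)
    (hM : ∀ f : X, (ι (M f) : ℝ → ℂ)
      =ᵐ[mu01] fun t => Complex.I * (2 * t - 1) * (ι f : ℝ → ℂ) t)
    (g : X) :
    ∃ A : X →L[ℂ] X,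
      (∀ f : X, A f = f + ∑' k : ℕ,
        ((Nat.factorial (k + 1) : ℂ))⁻¹ •
          conv ((M ^ (k + 1)) f) (convPow (fun u v => conv u v) g k)) ∧
      ‖A - 1‖ ≤ Real.exp (ρ * ‖M‖ * ‖g‖) - 1 ∧
      (‖g‖ ≤ (2 * ρ * ‖M‖)⁻¹ → IsUnit A) :=
  Ag_bounded_and_invertible_general conv ρ hρ hbound M g
end
end
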